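/- arXiv:2304.09853 — 3 statements merged into one kernel-verified Lean document; each statement's English description precedes it below -/
import Mathlib

section
/- Any randomized algorithm for the tree MDP family has sample complexity at least T(⌈A^T/2⌉ − 1): if for every MDP M_{a_{1:T}} in the family the algorithm outputs the optimal sequence with probability at least 1/2 after n episodes, then n ≥ ⌈A^T/2⌉ − 1. -/
open Finset Classical

/-- In the tree-MDP family indexed by target sequences `target : Fin T → Fin A`
(reward `1` exactly on the final action of the target sequence), querying an episode
`b` yields the observation `decide (b = target)`.  An adaptive algorithm
is a map `alg` from observation transcripts to the next queried sequence; `transcript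
alg target n` is the list of observations after `n` adaptively chosen episodes. -/
def transcript {T A : ℕ} (alg : List Bool → (Fin T → Fin A))
    (target : Fin T → Fin A) : ℕ → List Bool
  | 0 => []
  | n + 1 =>
      transcript alg target n ++ [decide (alg (transcript alg target n) = target)]

lemma transcript_cases {T A : ℕ} (alg : List Bool → (Fin T → Fin A))
    (t : Fin T → Fin A) :
    ∀ n, transcript alg t n = List.replicate n false ∨
      ∃ k < n, alg (List.replicate k false) = t
  | 0 => Or.inl rfl
  | n + 1 => by
    rcases transcript_cases alg t n with h | ⟨k, hk, hkt⟩
    · by_cases he : alg (List.replicate n false) = t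
      · exact Or.inr ⟨n, Nat.lt_succ_self n, he⟩
      · left
        rw [transcript, h, List.replicate_succ']
        simp [he]
    · exact Or.inr ⟨k, Nat.lt_succ_of_lt hk, hkt⟩

lemma det_bound {T A : ℕ} (alg out : List Bool → (Fin T → Fin A)) (n : ℕ) :
    (Finset.univ.filter
      (fun t : Fin T → Fin A => out (transcript alg t n) = t)).card ≤ n + 1 := by
  classical
  have hsub : (Finset.univ.filter
      (fun t : Fin T → Fin A => out (transcript alg t n) = t)) ⊆
      insert (out (List.replicate n false))
        ((Finset.range n).image (fun k => alg (List.replicate k false))) := by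
    intro t ht
    simp only [mem_filter, mem_univ, true_and] at ht
    rcases transcript_cases alg t n with h | ⟨k, hk, hkt⟩
    · rw [h] at ht
      exact mem_insert.mpr (Or.inl ht.symm)
    · exact mem_insert.mpr (Or.inr (mem_image.mpr ⟨k, mem_range.mpr hk, hkt⟩))
  calc (Finset.univ.filter
      (fun t : Fin T → Fin A => out (transcript alg t n) = t)).card
      ≤ (insert (out (List.replicate n false))
        ((Finset.range n).image (fun k => alg (List.replicate k false)))).card :=
        Finset.card_le_card hsub
    _ ≤ ((Finset.range n).image (fun k => alg (List.replicate k false))).card + 1 :=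
        Finset.card_insert_le _ _
    _ ≤ n + 1 := by
        have := Finset.card_image_le (s := Finset.range n)
          (f := fun k => alg (List.replicate k false))
        simpa using Nat.add_le_add_right (by simpa using this) 1

/--
Randomized lower bound for the tree-MDP family with `A ≥ 2` actions and
horizon `T`.  A randomized algorithm takes a random seed `z` drawn uniformly from a finite
nonempty seed space `Z`; `alg z` chooses queries and `out z` the final output, as functions
of the observation transcript.  If, after `n` episodes, the algorithm outputs the optimal
(target) sequence with probability at least `1/2` on *every* MDP `M_target` of the family,
then `n ≥ ⌈A^T/2⌉ − 1` (so its sample complexity is at least `T(⌈A^T/2⌉ − 1)` timesteps).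
Here `⌈A^T/2⌉ = (A^T + 1)/2` in natural-number arithmetic.
-/
theorem randomized_lower_bound
    (T A : ℕ) (hT : 1 ≤ T) (hA : 2 ≤ A)
    (Z : Type*) [Fintype Z] [Nonempty Z]
    (alg : Z → List Bool → (Fin T → Fin A)) (out : Z → List Bool → (Fin T → Fin A))
    (n : ℕ)
    (hsucc : ∀ target : Fin T → Fin A,
      2 * (Finset.univ.filter (fun z : Z =>
            out z (transcript (alg z) target n) = target)).card
        ≥ Fintype.card Z) :
    (A ^ T + 1) / 2 - 1 ≤ n := by
  classical
  have key : ∑ t : Fin T → Fin A,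
      ((Finset.univ.filter (fun z : Z =>
        out z (transcript (alg z) t n) = t)).card)
      = ∑ z : Z, ((Finset.univ.filter (fun t : Fin T → Fin A =>
        out z (transcript (alg z) t n) = t)).card) := by
    simp_rw [Finset.card_filter]
    exact Finset.sum_comm
  have hlow : Fintype.card (Fin T → Fin A) * Fintype.card Z ≤
      2 * ∑ t : Fin T → Fin A,
        ((Finset.univ.filter (fun z : Z =>
          out z (transcript (alg z) t n) = t)).card) := by
    rw [Finset.mul_sum]
    calc Fintype.card (Fin T → Fin A) * Fintype.card Z
        = ∑ _t : Fin T → Fin A, Fintype.card Z := by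
          simp [Finset.sum_const, Finset.card_univ, mul_comm]
      _ ≤ _ := Finset.sum_le_sum fun t _ => hsucc t
  have hhigh : ∑ z : Z, ((Finset.univ.filter (fun t : Fin T → Fin A =>
      out z (transcript (alg z) t n) = t)).card) ≤ Fintype.card Z * (n + 1) := by
    calc _ ≤ ∑ _z : Z, (n + 1) :=
          Finset.sum_le_sum fun z _ => det_bound (alg z) (out z) n
      _ = Fintype.card Z * (n + 1) := by simp [Finset.sum_const, Finset.card_univ, mul_comm]
  have hcomb : Fintype.card (Fin T → Fin A) * Fintype.card Z ≤
      2 * (Fintype.card Z * (n + 1)) := by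
    refine hlow.trans ?_
    rw [key]
    exact Nat.mul_le_mul_left 2 hhigh
  have hZ : 0 < Fintype.card Z := Fintype.card_pos
  have hcard : Fintype.card (Fin T → Fin A) = A ^ T := by simp
  rw [hcard] at hcomb
  have : A ^ T ≤ 2 * (n + 1) := by
    have h2 : A ^ T * Fintype.card Z ≤ (2 * (n + 1)) * Fintype.card Z := by
      linarith [hcomb]
    exact Nat.le_of_mul_le_mul_right h2 hZ
  omega
end

section
/- R-max upper confidence property: during the execution of R-max on a deterministic MDP with maximum per-step reward R_max, the optimal value function V̂* and Q-function Q̂* of the empirical model (unseen state-action pairs modeled as self-loops with reward R_max) always satisfy V*_t(s) ≤ V̂*_t(s) and Q*_t(s,a) ≤ Q̂*_t(s,a) for all t, s, a. -/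
open Finset Classical

/-- Total reward of playing a list of actions from state `s` in a deterministic MDP. -/
def seqReturn {S : Type*} (A : ℕ) (f : S → Fin A → S) (R : S → Fin A → ℝ) :
    S → List (Fin A) → ℝ
  | _, [] => 0
  | s, a :: rest => R s a + seqReturn A f R (f s a) rest

/-- Optimal value function by fuel recursion. -/
noncomputable def optV {S : Type*} (A : ℕ) (f : S → Fin A → S) (R : S → Fin A → ℝ) :
    ℕ → S → ℝ
  | 0, _ => 0
  | n + 1, s => ⨆ a : Fin A, (R s a + optV A f R n (f s a))

/-- Optimal Q-function at timestep `t` (horizon `T`). -/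
noncomputable def optQ {S : Type*} (A T : ℕ) (f : S → Fin A → S) (R : S → Fin A → ℝ)
    (t : ℕ) (s : S) (a : Fin A) : ℝ :=
  R s a + optV A f R (T - t) (f s a)

/-- Trajectory of a deterministic policy: `polState ... t` is the state at timestep `t+1`. -/
def polState {S : Type*} (A : ℕ) (f : S → Fin A → S) (p : ℕ → S → Fin A) (s1 : S) : ℕ → S
  | 0 => s1
  | t + 1 => f (polState A f p s1 t) (p (t + 1) (polState A f p s1 t))

/-- Return of a deterministic policy over a `T`-step episode from `s1`. -/
noncomputable def polRet {S : Type*} (A T : ℕ) (f : S → Fin A → S) (R : S → Fin A → ℝ)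
    (p : ℕ → S → Fin A) (s1 : S) : ℝ :=
  seqReturn A f R s1 (List.ofFn (fun i : Fin T => p (i + 1) (polState A f p s1 i)))

/-- Empirical transition model of R-max: unseen state-action pairs are self-loops. -/
noncomputable def fhat {S : Type*} (A : ℕ) (f : S → Fin A → S) (K : Set (S × Fin A)) :
    S → Fin A → S :=
  fun s a => if (s, a) ∈ K then f s a else s

/-- Empirical reward model of R-max: unseen state-action pairs get reward `Rmax`. -/
noncomputable def Rhat {S : Type*} (A : ℕ) (R : S → Fin A → ℝ) (Rmax : ℝ)
    (K : Set (S × Fin A)) : S → Fin A → ℝ :=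
  fun s a => if (s, a) ∈ K then R s a else Rmax

/-- State-action pairs visited when executing policy `p` from `s1` for `T` steps
in the true MDP. -/
def visited {S : Type*} (A T : ℕ) (f : S → Fin A → S) (p : ℕ → S → Fin A) (s1 : S) :
    Set (S × Fin A) :=
  {pair | ∃ t, t < T ∧
    pair = (polState A f p s1 t, p (t + 1) (polState A f p s1 t))}

/--
R-max upper-confidence property.  In a deterministic episodic MDP with
maximum per-step reward `Rmax = max_{s,a} R(s,a)`, for any set `K` of already-seen
state-action pairs, the optimal value and Q-functions of R-max's empirical model (in which
unseen pairs are self-loops with reward `Rmax`) dominate the true optimal value and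
Q-functions: `V*_t(s) ≤ V̂*_t(s)` and `Q*_t(s,a) ≤ Q̂*_t(s,a)` for all `t ∈ [1,T]`, `s`, `a`.
-/
theorem rmax_optimism
    {S : Type*} [Fintype S] [Nonempty S] (A T : ℕ) (hApos : 0 < A)
    (f : S → Fin A → S) (R : S → Fin A → ℝ)
    (Rmax : ℝ) (hRmax : Rmax = ⨆ p : S × Fin A, R p.1 p.2)
    (K : Set (S × Fin A)) :
    (∀ n s, n ≤ T →
        optV A f R n s ≤ optV A (fhat A f K) (Rhat A R Rmax K) n s) ∧
    (∀ t s a, 1 ≤ t → t ≤ T →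
        optQ A T f R t s a ≤ optQ A T (fhat A f K) (Rhat A R Rmax K) t s a) := by

  have hA : Nonempty (Fin A) := ⟨⟨0, hApos⟩⟩
  have hR : ∀ s a, R s a ≤ Rmax := by
    intro s a
    rw [hRmax]
    exact le_ciSup (f := fun p : S × Fin A => R p.1 p.2) (Set.Finite.bddAbove (Set.finite_range _)) (s, a)
  have hub : ∀ n s, optV A f R n s ≤ n * Rmax := by
    intro n
    induction n with
    | zero => intro s; simp [optV]
    | succ n ih =>
      intro s
      rw [optV]
      apply ciSup_le
      intro a
      have h1 := ih (f s a)
      have h2 := hR s a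
      push_cast
      linarith
  have hlb : ∀ (n : ℕ), ∀ s a, (s, a) ∉ K →
      (n : ℝ) * Rmax ≤ optV A (fhat A f K) (Rhat A R Rmax K) n s := by
    intro n
    induction n with
    | zero => intro s a _; simp [optV]
    | succ n ih =>
      intro s a hna
      rw [optV]
      refine le_trans ?_ (le_ciSup (Set.Finite.bddAbove (Set.finite_range _)) a)
      have h1 : fhat A f K s a = s := by simp [fhat, hna]
      have h2 : Rhat A R Rmax K s a = Rmax := by simp [Rhat, hna]
      rw [h1, h2]
      have := ih s a hna
      push_cast
      linarith
  have hV : ∀ n s, optV A f R n s ≤ optV A (fhat A f K) (Rhat A R Rmax K) n s := by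
    intro n
    induction n with
    | zero => intro s; simp [optV]
    | succ n ih =>
      intro s
      rw [optV, optV]
      apply ciSup_le
      intro a
      refine le_trans ?_ (le_ciSup (Set.Finite.bddAbove (Set.finite_range _)) a)
      by_cases h : (s, a) ∈ K
      · have h1 : fhat A f K s a = f s a := by simp [fhat, h]
        have h2 : Rhat A R Rmax K s a = R s a := by simp [Rhat, h]
        rw [h1, h2]
        linarith [ih (f s a)]
      · have h1 : fhat A f K s a = s := by simp [fhat, h]
        have h2 : Rhat A R Rmax K s a = Rmax := by simp [Rhat, h]
        rw [h1, h2]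
        linarith [hub n (f s a), hlb n s a h, hR s a]
  refine ⟨fun n s _ => hV n s, ?_⟩
  intro t s a _ _
  unfold optQ
  by_cases h : (s, a) ∈ K
  · have h1 : fhat A f K s a = f s a := by simp [fhat, h]
    have h2 : Rhat A R Rmax K s a = R s a := by simp [Rhat, h]
    rw [h1, h2]
    linarith [hV (T - t) (f s a)]
  · have h1 : fhat A f K s a = s := by simp [fhat, h]
    have h2 : Rhat A R Rmax K s a = Rmax := by simp [Rhat, h]
    rw [h1, h2]
    linarith [hub (T - t) (f s a), hlb (T - t) s a h, hR s a]
end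

section
/- Covering length lower bound: with μ_t(s,a) as above, the covering length satisfies L ≥ log(2) / (2 · min_{(s,a)} ∑_{t=1}^T μ_t(s,a)). -/
open Finset Classical

/-!
Fix the pair `p` minimising `m = ∑ₜ μₜ(p)`. By the union bound over time steps a single
episode visits `p` with probability `q ≤ m`, so `n` independent episodes all miss `p`, and hence
fail to cover, with probability `(1 - q)ⁿ`. Covering with probability `≥ 1/2` forces
`(1 - q)ⁿ ≤ 1/2`, and `-log (1 - q) ≤ 2q` for `0 ≤ q ≤ 1/2` turns this into
`log 2 ≤ 2nq ≤ 2nm`.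
-/

lemma Real.neg_log_one_sub_le_two_mul {q : ℝ} (hq0 : 0 ≤ q) (hq : q ≤ 1 / 2) :
    -Real.log (1 - q) ≤ 2 * q := by
  have hpos : 0 < 1 - q := by linarith
  have hlog : Real.log (1 - q)⁻¹ ≤ (1 - q)⁻¹ - 1 :=
    Real.log_le_sub_one_of_pos (inv_pos.mpr hpos)
  have hinv : (1 - q)⁻¹ - 1 ≤ 2 * q := by
    rw [sub_le_iff_le_add, inv_le_iff_one_le_mul₀ hpos]
    nlinarith
  rw [Real.log_inv] at hlog
  linarith

lemma Real.log_two_le_of_one_sub_pow_le_half {q : ℝ} {n : ℕ} (hq0 : 0 ≤ q)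
    (hq : q ≤ 1 / 2) (h : (1 - q) ^ n ≤ 1 / 2) : Real.log 2 ≤ 2 * n * q := by
  have hlog : n * Real.log (1 - q) ≤ -Real.log 2 := by
    have := Real.log_le_log (pow_pos (by linarith) n) h
    rwa [Real.log_pow, one_div, Real.log_inv] at this
  nlinarith [Real.neg_log_one_sub_le_two_mul hq0 hq, (Nat.cast_nonneg n : (0 : ℝ) ≤ n)]

lemma Real.log_two_div_le_of_one_sub_pow_le_half {q m : ℝ} {n : ℕ} (hq0 : 0 ≤ q)
    (hqm : q ≤ m) (h : (1 - q) ^ n ≤ 1 / 2) : Real.log 2 / (2 * m) ≤ n := by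
  have hn : (1 : ℝ) ≤ n := by
    rcases n with _ | n
    · norm_num at h
    · simp
  have hlog2 : 0 < Real.log 2 := Real.log_pos one_lt_two
  rcases le_or_gt (1 / 2) m with hm | hm
  · calc Real.log 2 / (2 * m) ≤ Real.log 2 / 1 := by gcongr; linarith
      _ ≤ n := by linarith [Real.log_two_lt_d9]
  · have hlog2_le := Real.log_two_le_of_one_sub_pow_le_half hq0 (by linarith) h
    have hmpos : 0 < m := by nlinarith
    rw [div_le_iff₀ (by positivity)]
    nlinarith

section Weights

variable {Ω : Type*} [Fintype Ω]

lemma sum_filter_exists_le_sum_sum_filter {ι M : Type*} [Fintype ι] [AddCommMonoid M]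
    [PartialOrder M] [IsOrderedAddMonoid M] {ρ : Ω → M} (hρ : ∀ τ, 0 ≤ ρ τ)
    (P : ι → Ω → Prop) [∀ t, DecidablePred (P t)]
    [DecidablePred fun τ => ∃ t, P t τ] :
    ∑ τ ∈ univ.filter (fun τ => ∃ t, P t τ), ρ τ ≤
      ∑ t, ∑ τ ∈ univ.filter (P t), ρ τ := by
  simp_rw [sum_filter]
  rw [sum_comm]
  refine sum_le_sum fun τ _ => ?_
  split_ifs with hτ
  · obtain ⟨t, ht⟩ := hτ
    calc ρ τ = if P t τ then ρ τ else 0 := (if_pos ht).symm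
      _ ≤ ∑ t, if P t τ then ρ τ else 0 :=
        single_le_sum (f := fun t => if P t τ then ρ τ else 0)
          (fun t _ => by split_ifs <;> simp [hρ τ]) (mem_univ t)
  · exact sum_nonneg fun t _ => by split_ifs <;> simp [hρ τ]

lemma sum_filter_exists_prod_eq_one_sub_pow {R : Type*} [CommRing R] {ρ : Ω → R}
    (hsum : ∑ τ, ρ τ = 1) (P : Ω → Prop) [DecidablePred P] (n : ℕ) :
    ∑ ε ∈ univ.filter (fun ε : Fin n → Ω => ∃ i, P (ε i)), ∏ i, ρ (ε i) =
      1 - (1 - ∑ τ ∈ univ.filter P, ρ τ) ^ n := by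
  have hmiss :
      ∑ τ ∈ univ.filter (fun τ => ¬ P τ), ρ τ = 1 - ∑ τ ∈ univ.filter P, ρ τ := by
    rw [← hsum, ← sum_filter_add_sum_filter_not univ P]
    ring
  have hnone : univ.filter (fun ε : Fin n → Ω => ¬ ∃ i, P (ε i)) =
      Fintype.piFinset (fun _ => univ.filter (fun τ => ¬ P τ)) := by
    ext ε
    simp
  have htotal : ∑ ε : Fin n → Ω, ∏ i, ρ (ε i) = 1 := by
    rw [← Fintype.piFinset_univ, ← sum_pow', hsum, one_pow]
  rw [eq_sub_iff_add_eq, ← hmiss, sum_pow', ← hnone, sum_filter_add_sum_filter_not, htotal]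

end Weights

theorem covering_length_lower_bound_general
    {S A : Type*} [Fintype S] [Fintype A] [Nonempty S] [Nonempty A]
    (T : ℕ)
    (ρ : (Fin T → S × A) → ℝ) (hnn : ∀ τ, 0 ≤ ρ τ) (hsum : ∑ τ, ρ τ = 1)
    (μ : Fin T → S × A → ℝ)
    (hμ : μ = fun t p => ∑ τ ∈ Finset.univ.filter (fun τ : Fin T → S × A => τ t = p), ρ τ)
    (coverProb : ℕ → ℝ)
    (hcp : coverProb = fun n =>
      ∑ ε ∈ Finset.univ.filter
          (fun ε : Fin n → (Fin T → S × A) => ∀ p : S × A, ∃ i t, ε i t = p),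
        ∏ i, ρ (ε i))
    (n : ℕ) (hcover : 1 ≤ 2 * coverProb n) :
    Real.log 2 / (2 * ⨅ p : S × A, ∑ t : Fin T, μ t p) ≤ n := by
  obtain ⟨p, hp⟩ := exists_eq_ciInf_of_finite (f := fun p : S × A => ∑ t : Fin T, μ t p)
  set q := ∑ τ ∈ univ.filter (fun τ : Fin T → S × A => ∃ t, τ t = p), ρ τ
  have hq0 : 0 ≤ q := sum_nonneg fun τ _ => hnn τ
  have hqm : q ≤ ⨅ p : S × A, ∑ t : Fin T, μ t p := by
    rw [← hp, hμ]
    dsimp only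
    exact sum_filter_exists_le_sum_sum_filter hnn fun t τ => τ t = p
  have hcover_le : coverProb n ≤ 1 - (1 - q) ^ n := by
    rw [hcp]
    dsimp only
    refine (sum_le_sum_of_subset_of_nonneg (monotone_filter_right _ fun ε _ hε => ?_)
      fun ε _ _ => prod_nonneg fun i _ => hnn (ε i)).trans
        (sum_filter_exists_prod_eq_one_sub_pow hsum (fun τ => ∃ t, τ t = p) n).le
    exact hε p
  exact Real.log_two_div_le_of_one_sub_pow_le_half hq0 hqm (by linarith)

/--
Covering length lower bound.  Episodes are i.i.d. draws of trajectories
`τ : Fin T → S × A` from a distribution `ρ`, with occupancy measure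
`μ t (s,a) = P(τ t = (s,a))`.  If `n` episodes suffice to visit every state-action pair
at least once with probability at least `1/2`, then
`n ≥ log(2) / (2 · min_{(s,a)} ∑_t μ_t(s,a))`; that is, the covering length `L` satisfies
`L ≥ log(2) / (2 · min_{(s,a)} ∑_t μ_t(s,a))`.
-/
theorem covering_length_lower_bound
    {S A : Type*} [Fintype S] [Fintype A] [Nonempty S] [Nonempty A]
    (T : ℕ) (hT : 1 ≤ T)
    (ρ : (Fin T → S × A) → ℝ) (hnn : ∀ τ, 0 ≤ ρ τ) (hsum : ∑ τ, ρ τ = 1)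
    (μ : Fin T → S × A → ℝ)
    (hμ : μ = fun t p => ∑ τ ∈ Finset.univ.filter (fun τ : Fin T → S × A => τ t = p), ρ τ)
    (coverProb : ℕ → ℝ)
    (hcp : coverProb = fun n =>
      ∑ ε ∈ Finset.univ.filter
          (fun ε : Fin n → (Fin T → S × A) => ∀ p : S × A, ∃ i t, ε i t = p),
        ∏ i, ρ (ε i))
    (n : ℕ) (hcover : 1 ≤ 2 * coverProb n) :
    Real.log 2 / (2 * ⨅ p : S × A, ∑ t : Fin T, μ t p) ≤ n :=
  covering_length_lower_bound_general T ρ hnn hsum μ hμ coverProb hcp n hcover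
end
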